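/- For every integer k ≥ 2 and all n, m ≥ 0, the Bell numbers of order k satisfy b_k(n)·b_k(m) ≤ b_k(n+m) ≤ C(n+m, n)·b_k(n)·b_k(m), where C(n+m, n) is the binomial coefficient. -/

import Mathlib

open scoped Nat

/-- The `k`-times iterated exponential function: `expIter 0 = id`,
`expIter (k+1) x = exp (expIter k x)`. -/
noncomputable def expIter : ℕ → ℝ → ℝ
  | 0 => id
  | k + 1 => fun x => Real.exp (expIter k x)

/-- `BellB k n` is the `n`-th derivative of the `k`-times iterated exponential at `0`,
so that `expIter k x = ∑ n, BellB k n * x ^ n / n !`. -/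
noncomputable def BellB (k n : ℕ) : ℝ := iteratedDeriv n (expIter k) 0

/-- The Bell numbers of order `k`: `bellOrd k n = BellB k n / expIter k 0`. -/
noncomputable def bellOrd (k n : ℕ) : ℝ := BellB k n / expIter k 0

/-!
Since `(expIter (k + 1))' = (expIter k)' * expIter (k + 1)`, the Taylor coefficients
`c = bellCoeff (k + 1)` satisfy `n * c n = ∑ i < n, a i * c (n - 1 - i)` with
`a i = BellB k (i + 1) / i ! ≥ 0`.

The lower bound is supermultiplicativity of `bellOrd k`, by induction through the Leibniz form of
this recurrence. The upper bound is submultiplicativity `c (n + m) ≤ c n * c m`: splitting the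
recurrence for `c (n + m)` at `i = n` reduces it to `a (n + j) ≤ a j * c n`. For `k = 1` this is
`n ! * j ! ≤ (n + j)!` together with `bellOrd 2 n ≥ 1`; for larger `k` it follows from
submultiplicativity one level down and the growth estimate
`(n + 1) * bellCoeff k n ≤ bellCoeff (k + 1) n`, proved by induction on `k ≥ 2` starting from
`n + 1 ≤ 2 * bellOrd 2 n ≤ exp 1 * bellOrd 2 n`.
-/

open Finset
open scoped ContDiff

section Recurrence

variable {A B a b c d : ℕ → ℝ}

theorem nonneg_of_rec (hA : ∀ i, 0 ≤ A i) (hB₀ : 0 ≤ B 0)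
    (hrec : ∀ n, B (n + 1) = ∑ i ∈ range (n + 1), n.choose i * A i * B (n - i)) (n : ℕ) :
    0 ≤ B n := by
  induction n using Nat.strong_induction_on with
  | _ n ih =>
    cases n with
    | zero => exact hB₀
    | succ n =>
      rw [hrec]
      exact sum_nonneg fun i _ => mul_nonneg (mul_nonneg (by positivity) (hA i)) (ih _ (by omega))

theorem mul_le_mul_add_of_rec (hA : ∀ i, 0 ≤ A i) (hB : ∀ n, 0 ≤ B n)
    (hrec : ∀ n, B (n + 1) = ∑ i ∈ range (n + 1), n.choose i * A i * B (n - i)) (n m : ℕ) :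
    B n * B m ≤ B 0 * B (n + m) := by
  induction m using Nat.strong_induction_on with
  | _ m ih =>
    cases m with
    | zero => rw [add_zero, mul_comm]
    | succ m =>
      have hterm : ∀ i, 0 ≤ ((n + m).choose i : ℝ) * A i * (B 0 * B (n + m - i)) := fun i =>
        mul_nonneg (mul_nonneg (by positivity) (hA i)) (mul_nonneg (hB 0) (hB _))
      calc B n * B (m + 1)
          = ∑ i ∈ range (m + 1), m.choose i * A i * (B n * B (m - i)) := by
            rw [hrec, mul_sum]; exact sum_congr rfl fun i _ => by ring
        _ ≤ ∑ i ∈ range (m + 1), (n + m).choose i * A i * (B 0 * B (n + m - i)) := by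
            refine sum_le_sum fun i hi => ?_
            have hi : i ≤ m := mem_range_succ_iff.mp hi
            have hIH : B n * B (m - i) ≤ B 0 * B (n + m - i) := by
              simpa only [show n + (m - i) = n + m - i by omega] using ih (m - i) (by omega)
            have hchoose : (m.choose i : ℝ) ≤ (n + m).choose i := by
              exact_mod_cast Nat.choose_le_choose i (Nat.le_add_left m n)
            exact mul_le_mul (mul_le_mul_of_nonneg_right hchoose (hA i)) hIH
              (mul_nonneg (hB n) (hB _)) (mul_nonneg (by positivity) (hA i))
        _ ≤ ∑ i ∈ range (n + m + 1), (n + m).choose i * A i * (B 0 * B (n + m - i)) :=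
            sum_le_sum_of_subset_of_nonneg (range_subset_range.mpr (by omega)) fun i _ _ => hterm i
        _ = B 0 * B (n + (m + 1)) := by
            rw [← add_assoc, hrec, mul_sum]; exact sum_congr rfl fun i _ => by ring

theorem taylor_rec_of_rec
    (hrec : ∀ n, B (n + 1) = ∑ i ∈ range (n + 1), n.choose i * A i * B (n - i)) (n : ℕ) :
    n * (B n / n !) = ∑ i ∈ range n, A i / i ! * (B (n - 1 - i) / (n - 1 - i)!) := by
  cases n with
  | zero => simp
  | succ n =>
    have hscale : ((n + 1 : ℕ) : ℝ) * (B (n + 1) / (n + 1)!) = B (n + 1) / n ! := by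
      rw [Nat.factorial_succ]; push_cast; field_simp
    rw [hscale, hrec, sum_div]
    refine sum_congr rfl fun i hi => ?_
    rw [Nat.cast_choose ℝ (mem_range_succ_iff.mp hi), show n + 1 - 1 - i = n - i by omega]
    field_simp

theorem mul_add_le_mul_of_taylor_rec (ha : ∀ i, 0 ≤ a i) (hc : ∀ n, 0 ≤ c n)
    (hrec : ∀ n, n * c n = ∑ i ∈ range n, a i * c (n - 1 - i))
    (hshift : ∀ n j, c 0 * a (n + j) ≤ a j * c n) (n m : ℕ) :
    c 0 * c (n + m) ≤ c n * c m := by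
  induction n using Nat.strong_induction_on with
  | _ n ih =>
    rcases Nat.eq_zero_or_pos (n + m) with h | h
    · obtain ⟨rfl, rfl⟩ : n = 0 ∧ m = 0 := by omega
      rfl
    refine le_of_mul_le_mul_left ?_ (show (0 : ℝ) < (n + m : ℕ) by exact_mod_cast h)
    calc ((n + m : ℕ) : ℝ) * (c 0 * c (n + m))
        = ∑ i ∈ range n, a i * (c 0 * c (n - 1 - i + m))
          + ∑ j ∈ range m, c 0 * a (n + j) * c (m - 1 - j) := by
          rw [mul_left_comm, hrec, sum_range_add, mul_add, mul_sum, mul_sum]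
          congr 1 <;> refine sum_congr rfl fun i hi => ?_
          · rw [show n + m - 1 - i = n - 1 - i + m by simp at hi; omega]; ring
          · rw [show n + m - 1 - (n + i) = m - 1 - i by omega]; ring
      _ ≤ ∑ i ∈ range n, a i * (c (n - 1 - i) * c m)
          + ∑ j ∈ range m, a j * c n * c (m - 1 - j) := by
          refine add_le_add (sum_le_sum fun i hi => ?_) (sum_le_sum fun j _ => ?_)
          · exact mul_le_mul_of_nonneg_left (ih _ (by simp at hi; omega)) (ha i)
          · exact mul_le_mul_of_nonneg_right (hshift n j) (hc _)
      _ = ((n + m : ℕ) : ℝ) * (c n * c m) := by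
          simp_rw [← mul_assoc, ← sum_mul, mul_assoc (a _) (c n), mul_left_comm (a _) (c n),
            ← mul_sum, ← hrec]
          push_cast; ring

theorem add_one_mul_le_of_taylor_rec (ha : ∀ i, 0 ≤ a i) (hc : ∀ n, 0 ≤ c n)
    (hd : ∀ n, 0 ≤ d n) (hab : ∀ i, (i + 2) * a i ≤ b i)
    (hc_rec : ∀ n, n * c n = ∑ i ∈ range n, a i * c (n - 1 - i))
    (hd_rec : ∀ n, n * d n = ∑ i ∈ range n, b i * d (n - 1 - i)) (n : ℕ) :
    (n + 1) * d 0 * c n ≤ c 0 * d n := by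
  induction n using Nat.strong_induction_on with
  | _ n ih =>
    rcases Nat.eq_zero_or_pos n with rfl | hn
    · simp [mul_comm]
    refine le_of_mul_le_mul_left ?_ (show (0 : ℝ) < n by exact_mod_cast hn)
    calc (n : ℝ) * ((n + 1) * d 0 * c n)
        = ∑ i ∈ range n, (n + 1) * a i * (d 0 * c (n - 1 - i)) := by
          rw [mul_left_comm, mul_assoc, hc_rec, mul_sum, mul_sum]
          exact sum_congr rfl fun i _ => by ring
      _ ≤ ∑ i ∈ range n,
            (i + 2) * a i * ((((n - 1 - i : ℕ) : ℝ) + 1) * d 0 * c (n - 1 - i)) := by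
          refine sum_le_sum fun i hi => ?_
          obtain ⟨r, rfl⟩ := Nat.exists_eq_add_of_lt (mem_range.mp hi)
          have hcoef : ((i + r + 1 : ℕ) + 1 : ℝ) ≤ (i + 2) * ((r : ℝ) + 1) := by
            push_cast
            nlinarith [(r.cast_nonneg : (0 : ℝ) ≤ r), (i.cast_nonneg : (0 : ℝ) ≤ i)]
          rw [show i + r + 1 - 1 - i = r by omega]
          have := mul_le_mul_of_nonneg_right hcoef (mul_nonneg (ha i) (mul_nonneg (hd 0) (hc r)))
          linarith
      _ ≤ ∑ i ∈ range n, b i * (c 0 * d (n - 1 - i)) := by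
          refine sum_le_sum fun i hi => ?_
          exact mul_le_mul (hab i) (ih _ (by simp at hi; omega))
            (mul_nonneg (mul_nonneg (by positivity) (hd 0)) (hc _))
            ((mul_nonneg (by positivity) (ha i)).trans (hab i))
      _ = n * (c 0 * d n) := by
          rw [mul_left_comm, hd_rec, mul_sum]
          exact sum_congr rfl fun i _ => by ring

end Recurrence

theorem contDiff_expIter (k : ℕ) : ContDiff ℝ ∞ (expIter k) := by
  induction k with
  | zero => exact contDiff_id
  | succ k ih => exact ih.exp

theorem deriv_expIter_succ (k : ℕ) :
    deriv (expIter (k + 1)) = deriv (expIter k) * expIter (k + 1) := by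
  funext x
  rw [Pi.mul_apply, mul_comm]
  exact ((contDiff_expIter k).differentiable (by simp) x).hasDerivAt.exp.deriv

theorem expIter_succ_pos (k : ℕ) (x : ℝ) : 0 < expIter (k + 1) x := Real.exp_pos _

theorem expIter_le_expIter_succ (k : ℕ) (x : ℝ) : expIter k x ≤ expIter (k + 1) x :=
  (le_add_of_nonneg_right zero_le_one).trans (Real.add_one_le_exp _)

theorem BellB_one (n : ℕ) : BellB 1 n = 1 := by
  rw [BellB, iteratedDeriv_eq_iterate, show expIter 1 = Real.exp from rfl, Real.iter_deriv_exp,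
    Real.exp_zero]

theorem BellB_succ_succ (k n : ℕ) :
    BellB (k + 1) (n + 1) =
      ∑ i ∈ range (n + 1), n.choose i * BellB k (i + 1) * BellB (k + 1) (n - i) := by
  have hd : ContDiff ℝ ∞ (deriv (expIter k)) :=
    (contDiff_infty_iff_deriv.mp (contDiff_expIter k)).2
  rw [BellB, iteratedDeriv_succ', deriv_expIter_succ,
    iteratedDeriv_mul (hd.of_le (by exact_mod_cast le_top)).contDiffAt
      ((contDiff_expIter _).of_le (by exact_mod_cast le_top)).contDiffAt]
  simp only [BellB, ← iteratedDeriv_succ']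

theorem BellB_nonneg (k n : ℕ) : 0 ≤ BellB k n := by
  induction k generalizing n with
  | zero =>
    change 0 ≤ iteratedDeriv n id (0 : ℝ)
    rw [iteratedDeriv_id]
    split_ifs <;> norm_num
  | succ k ih =>
    exact nonneg_of_rec (fun i => ih (i + 1)) (expIter_succ_pos _ 0).le (BellB_succ_succ k) n

theorem bellOrd_zero (k : ℕ) : bellOrd (k + 1) 0 = 1 := div_self (expIter_succ_pos k 0).ne'

theorem bellOrd_nonneg (k n : ℕ) : 0 ≤ bellOrd (k + 1) n :=
  div_nonneg (BellB_nonneg _ n) (expIter_succ_pos k 0).le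

theorem expIter_mul_bellOrd (k n : ℕ) : expIter (k + 1) 0 * bellOrd (k + 1) n = BellB (k + 1) n :=
  mul_div_cancel₀ _ (expIter_succ_pos k 0).ne'

theorem bellOrd_succ_succ (k n : ℕ) :
    bellOrd (k + 1) (n + 1) =
      ∑ i ∈ range (n + 1), n.choose i * BellB k (i + 1) * bellOrd (k + 1) (n - i) := by
  simp only [bellOrd, BellB_succ_succ, sum_div, mul_div_assoc]

theorem bellOrd_mul_le_bellOrd_add (k n m : ℕ) :
    bellOrd (k + 1) n * bellOrd (k + 1) m ≤ bellOrd (k + 1) (n + m) := by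
  simpa only [bellOrd_zero, one_mul] using
    mul_le_mul_add_of_rec (A := fun i => BellB k (i + 1)) (fun i => BellB_nonneg _ _)
      (bellOrd_nonneg k) (bellOrd_succ_succ k) n m

/-- The `n`-th Taylor coefficient of `expIter k x / expIter k 0` at `x = 0`. -/
noncomputable def bellCoeff (k n : ℕ) : ℝ := bellOrd k n / n !

theorem factorial_mul_bellCoeff (k n : ℕ) : n ! * bellCoeff k n = bellOrd k n :=
  mul_div_cancel₀ _ (by positivity)

theorem bellCoeff_zero (k : ℕ) : bellCoeff (k + 1) 0 = 1 := by
  rw [bellCoeff, bellOrd_zero, Nat.factorial_zero, Nat.cast_one, div_one]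

theorem bellCoeff_nonneg (k n : ℕ) : 0 ≤ bellCoeff (k + 1) n :=
  div_nonneg (bellOrd_nonneg k n) (by positivity)

theorem bellCoeff_rec (k n : ℕ) :
    n * bellCoeff (k + 1) n =
      ∑ i ∈ range n, BellB k (i + 1) / i ! * bellCoeff (k + 1) (n - 1 - i) :=
  taylor_rec_of_rec (bellOrd_succ_succ k) n

theorem BellB_succ_div_factorial (k i : ℕ) :
    BellB (k + 1) (i + 1) / i ! = expIter (k + 1) 0 * ((i + 1) * bellCoeff (k + 1) (i + 1)) := by
  rw [← expIter_mul_bellOrd, ← factorial_mul_bellCoeff, Nat.factorial_succ]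
  push_cast
  field_simp

theorem one_le_bellOrd_two (n : ℕ) : 1 ≤ bellOrd 2 n := by
  induction n with
  | zero => rw [bellOrd_zero]
  | succ n ih =>
    rw [bellOrd_succ_succ]
    calc 1 ≤ bellOrd 2 n := ih
      _ = n.choose 0 * BellB 1 (0 + 1) * bellOrd 2 (n - 0) := by simp [BellB_one]
      _ ≤ _ :=
        single_le_sum (f := fun i => (n.choose i : ℝ) * BellB 1 (i + 1) * bellOrd 2 (n - i))
          (fun i _ => mul_nonneg (mul_nonneg (Nat.cast_nonneg _) (BellB_nonneg 1 _))
            (bellOrd_nonneg 1 _)) (mem_range.mpr n.succ_pos)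

theorem le_bellOrd_two (n : ℕ) : (n : ℝ) ≤ bellOrd 2 n := by
  cases n with
  | zero => simpa using bellOrd_nonneg 1 0
  | succ n =>
    rw [bellOrd_succ_succ]
    calc ((n + 1 : ℕ) : ℝ) = ∑ i ∈ range (n + 1), (1 : ℝ) := by simp
      _ ≤ _ := sum_le_sum fun i hi => ?_
    rw [BellB_one, mul_one]
    exact one_le_mul_of_one_le_of_one_le
      (by exact_mod_cast Nat.choose_pos (mem_range_succ_iff.mp hi))
      (one_le_bellOrd_two _)

theorem add_one_mul_BellB_one_le (n : ℕ) : (n + 1) * BellB 1 n ≤ BellB 2 n := by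
  have he : (2 : ℝ) ≤ expIter 2 0 := by
    simpa [expIter] using (Real.exp_one_gt_d9.trans' (by norm_num)).le
  rw [BellB_one, mul_one, ← expIter_mul_bellOrd]
  nlinarith [one_le_bellOrd_two n, le_bellOrd_two n]

theorem add_one_mul_bellCoeff_le_of_BellB (k : ℕ)
    (hB : ∀ n, (n + 1) * BellB (k + 1) n ≤ BellB (k + 2) n) (n : ℕ) :
    (n + 1) * bellCoeff (k + 2) n ≤ bellCoeff (k + 3) n := by
  have hab (i : ℕ) : (i + 2) * (BellB (k + 1) (i + 1) / i !) ≤ BellB (k + 2) (i + 1) / i ! := by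
    rw [← mul_div_assoc]
    gcongr
    exact_mod_cast hB (i + 1)
  simpa only [bellCoeff_zero, mul_one, one_mul] using
    add_one_mul_le_of_taylor_rec (fun i => div_nonneg (BellB_nonneg _ _) (by positivity))
      (bellCoeff_nonneg _) (bellCoeff_nonneg _) hab (bellCoeff_rec _) (bellCoeff_rec _) n

theorem add_one_mul_BellB_le_of_bellCoeff (k : ℕ)
    (hc : ∀ n, (n + 1) * bellCoeff (k + 1) n ≤ bellCoeff (k + 2) n) (n : ℕ) :
    (n + 1) * BellB (k + 1) n ≤ BellB (k + 2) n := by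
  rw [← expIter_mul_bellOrd, ← expIter_mul_bellOrd, ← factorial_mul_bellCoeff,
    ← factorial_mul_bellCoeff]
  calc (n + 1) * (expIter (k + 1) 0 * (n ! * bellCoeff (k + 1) n))
      = expIter (k + 1) 0 * n ! * ((n + 1) * bellCoeff (k + 1) n) := by ring
    _ ≤ expIter (k + 2) 0 * n ! * bellCoeff (k + 2) n := by
      refine mul_le_mul (mul_le_mul_of_nonneg_right (expIter_le_expIter_succ _ _) (by positivity))
        (hc n) (mul_nonneg (by positivity) (bellCoeff_nonneg _ _))
        (mul_nonneg (expIter_succ_pos _ _).le (by positivity))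
    _ = _ := by ring

theorem add_one_mul_bellCoeff_le (k n : ℕ) :
    (n + 1) * bellCoeff (k + 2) n ≤ bellCoeff (k + 3) n := by
  induction k generalizing n with
  | zero => exact add_one_mul_bellCoeff_le_of_BellB 0 add_one_mul_BellB_one_le n
  | succ k ih =>
    exact add_one_mul_bellCoeff_le_of_BellB (k + 1) (add_one_mul_BellB_le_of_bellCoeff (k + 1) ih) n

theorem bellCoeff_add_le_mul_of_shift (k : ℕ)
    (hshift : ∀ n j, BellB (k + 1) (n + j + 1) / (n + j)! ≤
      BellB (k + 1) (j + 1) / j ! * bellCoeff (k + 2) n) (n m : ℕ) :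
    bellCoeff (k + 2) (n + m) ≤ bellCoeff (k + 2) n * bellCoeff (k + 2) m := by
  simpa only [bellCoeff_zero, one_mul] using
    mul_add_le_mul_of_taylor_rec (a := fun i => BellB (k + 1) (i + 1) / i !)
      (fun i => div_nonneg (BellB_nonneg _ _) (by positivity)) (bellCoeff_nonneg _)
      (bellCoeff_rec _) (fun n j => by simpa only [bellCoeff_zero, one_mul] using hshift n j) n m

theorem BellB_one_shift_le (n j : ℕ) :
    BellB 1 (n + j + 1) / (n + j)! ≤ BellB 1 (j + 1) / j ! * bellCoeff 2 n := by
  rw [BellB_one, BellB_one, bellCoeff, div_mul_div_comm, one_mul]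
  have hfac : (j ! * n ! : ℝ) ≤ (n + j)! := by
    exact_mod_cast Nat.le_of_dvd (Nat.factorial_pos _)
      (mul_comm j ! n ! ▸ Nat.factorial_mul_factorial_dvd_factorial_add n j)
  calc (1 : ℝ) / (n + j)! ≤ 1 / (j ! * n !) := by gcongr
    _ ≤ bellOrd 2 n / (j ! * n !) := by gcongr; exact one_le_bellOrd_two n

theorem BellB_shift_le_of_bellCoeff (k : ℕ)
    (hmul : ∀ n m, bellCoeff (k + 2) (n + m) ≤ bellCoeff (k + 2) n * bellCoeff (k + 2) m)
    (n j : ℕ) :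
    BellB (k + 2) (n + j + 1) / (n + j)! ≤ BellB (k + 2) (j + 1) / j ! * bellCoeff (k + 3) n := by
  rw [BellB_succ_div_factorial (k + 1), BellB_succ_div_factorial (k + 1), mul_assoc]
  refine mul_le_mul_of_nonneg_left ?_ (expIter_succ_pos _ _).le
  have hcoef : ((n + j : ℕ) : ℝ) + 1 ≤ (n + 1) * (j + 1) := by
    push_cast; nlinarith [(n.cast_nonneg : (0 : ℝ) ≤ n), (j.cast_nonneg : (0 : ℝ) ≤ j)]
  have hc := bellCoeff_nonneg (k + 1)
  calc (((n + j : ℕ) : ℝ) + 1) * bellCoeff (k + 2) (n + (j + 1))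
      ≤ (n + 1) * (j + 1) * (bellCoeff (k + 2) n * bellCoeff (k + 2) (j + 1)) :=
        mul_le_mul hcoef (hmul n (j + 1)) (hc _) (by positivity)
    _ = (j + 1) * bellCoeff (k + 2) (j + 1) * ((n + 1) * bellCoeff (k + 2) n) := by ring
    _ ≤ (j + 1) * bellCoeff (k + 2) (j + 1) * bellCoeff (k + 3) n :=
        mul_le_mul_of_nonneg_left (add_one_mul_bellCoeff_le k n) (mul_nonneg (by positivity) (hc _))

theorem bellCoeff_add_le_mul (k n m : ℕ) :
    bellCoeff (k + 2) (n + m) ≤ bellCoeff (k + 2) n * bellCoeff (k + 2) m := by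
  induction k generalizing n m with
  | zero => exact bellCoeff_add_le_mul_of_shift 0 BellB_one_shift_le n m
  | succ k ih => exact bellCoeff_add_le_mul_of_shift (k + 1) (BellB_shift_le_of_bellCoeff k ih) n m

theorem bellOrd_add_le_choose_mul (k n m : ℕ) :
    bellOrd (k + 2) (n + m) ≤ (n + m).choose n * bellOrd (k + 2) n * bellOrd (k + 2) m := by
  have hfac : ((n + m).choose n : ℝ) * n ! * m ! = (n + m)! := by
    have h := Nat.choose_mul_factorial_mul_factorial (Nat.le_add_right n m)
    rw [Nat.add_sub_cancel_left] at h
    exact_mod_cast h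
  rw [← factorial_mul_bellCoeff, ← factorial_mul_bellCoeff, ← factorial_mul_bellCoeff,
    ← hfac]
  calc ((n + m).choose n : ℝ) * n ! * m ! * bellCoeff (k + 2) (n + m)
      ≤ (n + m).choose n * n ! * m ! * (bellCoeff (k + 2) n * bellCoeff (k + 2) m) := by
        gcongr; exact bellCoeff_add_le_mul k n m
    _ = _ := by ring

/-- For every integer `k ≥ 2` and all `n, m ≥ 0`,
`bellOrd k n * bellOrd k m ≤ bellOrd k (n + m) ≤ (n+m).choose n * bellOrd k n * bellOrd k m`. -/
theorem bellOrd_product_bounds (k : ℕ) (hk : 2 ≤ k) (n m : ℕ) :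
    bellOrd k n * bellOrd k m ≤ bellOrd k (n + m) ∧
      bellOrd k (n + m) ≤ ((n + m).choose n : ℝ) * bellOrd k n * bellOrd k m := by
  obtain ⟨k, rfl⟩ : ∃ j, k = j + 2 := ⟨k - 2, by omega⟩
  exact ⟨bellOrd_mul_le_bellOrd_add (k + 1) n m, bellOrd_add_le_choose_mul k n m⟩
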